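/- arXiv:2601.09161 — 3 statements merged into one kernel-verified Lean document; each statement's English description precedes it below -/
import Mathlib

section
/- For a bivariate normal vector (X, Y) with mean zero, unit variances, and correlation σ ∈ (0,1), the indicators A = 1{μ₁ + X > 0} and B = 1{μ₂ + Y > 0} are positively correlated, i.e., Cov(A, B) > 0. -/
open MeasureTheory ProbabilityTheory Set

/-- Standard normal CDF. -/
noncomputable def Phi (x : ℝ) : ℝ := ((gaussianReal 0 1) (Set.Iic x)).toReal

/-- Bivariate normal law with mean zero, unit variances and correlation `σ`. -/
noncomputable def biGauss (σ : ℝ) : Measure (ℝ × ℝ) :=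
  Measure.map (fun p => (p.1, σ * p.1 + Real.sqrt (1 - σ ^ 2) * p.2))
    ((gaussianReal 0 1).prod (gaussianReal 0 1))

/-- Bivariate normal CDF `Φ₂(x, y, σ)`. -/
noncomputable def Phi2 (x y σ : ℝ) : ℝ := (biGauss σ (Set.Iic x ×ˢ Set.Iic y)).toReal

/-- Positive correlation of the Gaussian errors yields positively correlated indicators. -/
theorem probit_pos_corr (μ₁ μ₂ σ : ℝ) (hσ : σ ∈ Set.Ioo (0 : ℝ) 1) :
    0 < ((biGauss σ) {p : ℝ × ℝ | 0 < μ₁ + p.1 ∧ 0 < μ₂ + p.2}).toReal -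
        ((biGauss σ) {p : ℝ × ℝ | 0 < μ₁ + p.1}).toReal *
          ((biGauss σ) {p : ℝ × ℝ | 0 < μ₂ + p.2}).toReal := by
  obtain ⟨hσ0, hσ1⟩ := hσ
  set γ : Measure ℝ := gaussianReal 0 1 with hγ
  have hτ : 0 < Real.sqrt (1 - σ ^ 2) := Real.sqrt_pos.mpr (by nlinarith)
  set τ : ℝ := Real.sqrt (1 - σ ^ 2) with hτdef
  set t : ℝ → ℝ := fun x => (-μ₂ - σ * x) / τ with ht
  have htanti : StrictAnti t := by
    intro x y hxy
    have h1 : -μ₂ - σ * y < -μ₂ - σ * x := by nlinarith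
    exact div_lt_div_of_pos_right h1 hτ
  set G : ℝ → ENNReal := fun x => γ (Ioi (t x)) with hG
  have hGanti : Antitone fun s : ℝ => γ (Ioi s) := fun a b hab =>
    measure_mono (Ioi_subset_Ioi hab)
  have hGmeas : Measurable G := by
    exact hGanti.measurable.comp (by fun_prop)
  have hGle : ∀ x, G x ≤ 1 := fun x => prob_le_one
  have hGlt : ∀ x, G x < ⊤ := fun x => lt_of_le_of_lt (hGle x) ENNReal.one_lt_top
  set g : ℝ → ℝ := fun x => (G x).toReal with hg
  -- positivity of gaussian on open sets
  have habs : (volume : Measure ℝ) ≪ γ := gaussianReal_absolutelyContinuous' 0 one_ne_zero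
  have gpos : ∀ s : Set ℝ, IsOpen s → s.Nonempty → 0 < γ s := by
    intro s hs hne
    rw [pos_iff_ne_zero]
    intro h0
    exact absurd (habs h0) (hs.measure_pos volume hne).ne'
  -- the map and sets
  have hT : Measurable (fun p : ℝ × ℝ => (p.1, σ * p.1 + τ * p.2)) := by fun_prop
  have hb : biGauss σ = Measure.map (fun p : ℝ × ℝ => (p.1, σ * p.1 + τ * p.2)) (γ.prod γ) := by
    rw [biGauss]
  have hS1 : MeasurableSet {p : ℝ × ℝ | 0 < μ₁ + p.1} :=
    measurableSet_lt measurable_const (by fun_prop)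
  have hS2 : MeasurableSet {p : ℝ × ℝ | 0 < μ₂ + p.2} :=
    measurableSet_lt measurable_const (by fun_prop)
  have hS12 : MeasurableSet {p : ℝ × ℝ | 0 < μ₁ + p.1 ∧ 0 < μ₂ + p.2} := by
    have : {p : ℝ × ℝ | 0 < μ₁ + p.1 ∧ 0 < μ₂ + p.2}
        = {p : ℝ × ℝ | 0 < μ₁ + p.1} ∩ {p : ℝ × ℝ | 0 < μ₂ + p.2} := rfl
    rw [this]; exact hS1.inter hS2
  -- compute the three measures
  have e1 : biGauss σ {p : ℝ × ℝ | 0 < μ₁ + p.1} = γ (Ioi (-μ₁)) := by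
    rw [hb, Measure.map_apply hT hS1]
    have hpre : (fun p : ℝ × ℝ => (p.1, σ * p.1 + τ * p.2)) ⁻¹' {p : ℝ × ℝ | 0 < μ₁ + p.1}
        = (Ioi (-μ₁)) ×ˢ (univ : Set ℝ) := by
      ext p
      simp only [mem_preimage, mem_setOf_eq, mem_prod, mem_Ioi, mem_univ, and_true]
      constructor <;> intro h <;> linarith
    rw [hpre, Measure.prod_prod, measure_univ, mul_one]
  have sect : ∀ x : ℝ, {y : ℝ | 0 < μ₂ + (σ * x + τ * y)} = Ioi (t x) := by
    intro x
    ext y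
    simp only [mem_setOf_eq, mem_Ioi, ht, div_lt_iff₀ hτ]
    constructor <;> intro h <;> nlinarith
  have e2 : biGauss σ {p : ℝ × ℝ | 0 < μ₂ + p.2} = ∫⁻ x, G x ∂γ := by
    rw [hb, Measure.map_apply hT hS2, Measure.prod_apply (hT hS2)]
    congr 1
    ext x
    congr 1
    have : Prod.mk x ⁻¹' ((fun p : ℝ × ℝ => (p.1, σ * p.1 + τ * p.2)) ⁻¹'
        {p : ℝ × ℝ | 0 < μ₂ + p.2}) = {y : ℝ | 0 < μ₂ + (σ * x + τ * y)} := rfl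
    rw [this, sect x]
  have e12 : biGauss σ {p : ℝ × ℝ | 0 < μ₁ + p.1 ∧ 0 < μ₂ + p.2}
      = ∫⁻ x in Ioi (-μ₁), G x ∂γ := by
    rw [hb, Measure.map_apply hT hS12, Measure.prod_apply (hT hS12),
      ← lintegral_indicator measurableSet_Ioi _]
    congr 1
    ext x
    by_cases hx : x ∈ Ioi (-μ₁)
    · rw [indicator_of_mem hx]
      congr 1
      have : Prod.mk x ⁻¹' ((fun p : ℝ × ℝ => (p.1, σ * p.1 + τ * p.2)) ⁻¹'
          {p : ℝ × ℝ | 0 < μ₁ + p.1 ∧ 0 < μ₂ + p.2})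
          = {y : ℝ | 0 < μ₁ + x ∧ 0 < μ₂ + (σ * x + τ * y)} := rfl
      rw [this]
      have hx' : 0 < μ₁ + x := by simp only [mem_Ioi] at hx; linarith
      have : {y : ℝ | 0 < μ₁ + x ∧ 0 < μ₂ + (σ * x + τ * y)}
          = {y : ℝ | 0 < μ₂ + (σ * x + τ * y)} := by
        ext y; simp [hx']
      rw [this, sect x]
    · rw [indicator_of_notMem hx]
      have : Prod.mk x ⁻¹' ((fun p : ℝ × ℝ => (p.1, σ * p.1 + τ * p.2)) ⁻¹'
          {p : ℝ × ℝ | 0 < μ₁ + p.1 ∧ 0 < μ₂ + p.2}) = (∅ : Set ℝ) := by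
        ext y
        simp only [mem_preimage, mem_setOf_eq, mem_empty_iff_false, iff_false, not_and]
        intro h
        simp only [mem_Ioi, not_lt] at hx
        linarith
      rw [this, measure_empty]
  -- convert to real integrals
  have hGae : ∀ᵐ x ∂γ, G x < ⊤ := ae_of_all _ hGlt
  have i2 : (∫⁻ x, G x ∂γ).toReal = ∫ x, g x ∂γ :=
    (integral_toReal hGmeas.aemeasurable hGae).symm
  have i12 : (∫⁻ x in Ioi (-μ₁), G x ∂γ).toReal = ∫ x in Ioi (-μ₁), g x ∂γ :=
    (integral_toReal hGmeas.aemeasurable (ae_of_all _ hGlt)).symm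
  rw [e1, e2, e12, i2, i12]
  -- basic quantities
  set c : ℝ := -μ₁ with hc
  set a : ℝ := (γ (Ioi c)).toReal with ha
  set b : ℝ := (γ (Iic c)).toReal with hbdef
  have hapos : 0 < a := ENNReal.toReal_pos (gpos _ isOpen_Ioi (nonempty_Ioi)).ne'
    (measure_ne_top _ _)
  have hbpos : 0 < b := by
    have h1 : 0 < γ (Iio c) := gpos _ isOpen_Iio nonempty_Iio
    have h2 : γ (Iio c) ≤ γ (Iic c) := measure_mono Iio_subset_Iic_self
    exact ENNReal.toReal_pos (lt_of_lt_of_le h1 h2).ne' (measure_ne_top _ _)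
  have hab : a + b = 1 := by
    rw [ha, hbdef, ← ENNReal.toReal_add (measure_ne_top _ _) (measure_ne_top _ _)]
    have h := measure_add_measure_compl (μ := γ) (measurableSet_Ioi (a := c))
    rw [compl_Ioi, measure_univ] at h
    rw [h, ENNReal.toReal_one]
  -- g is bounded, measurable, integrable
  have hgm : Measurable g := hGmeas.ennreal_toReal
  have hgint : Integrable g γ := by
    refine Integrable.mono' (integrable_const (1 : ℝ)) hgm.aestronglyMeasurable
      (ae_of_all _ fun x => ?_)
    rw [Real.norm_eq_abs, abs_of_nonneg ENNReal.toReal_nonneg]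
    simpa using ENNReal.toReal_mono ENNReal.one_ne_top (hGle x)
  -- strict monotonicity of g
  have hstrict : ∀ x y : ℝ, x < y → g x < g y := by
    intro x y hxy
    have hts : t y < t x := htanti hxy
    have hdisj : Disjoint (Ioc (t y) (t x)) (Ioi (t x)) := Ioc_disjoint_Ioi le_rfl
    have hunion : Ioc (t y) (t x) ∪ Ioi (t x) = Ioi (t y) := Ioc_union_Ioi_eq_Ioi hts.le
    have hsum : γ (Ioi (t y)) = γ (Ioc (t y) (t x)) + γ (Ioi (t x)) := by
      rw [← hunion, measure_union hdisj measurableSet_Ioi]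
    have hpos : 0 < γ (Ioc (t y) (t x)) :=
      lt_of_lt_of_le (gpos _ isOpen_Ioo (nonempty_Ioo.mpr hts)) (measure_mono Ioo_subset_Ioc_self)
    have hfin : γ (Ioc (t y) (t x)) ≠ ⊤ := measure_ne_top _ _
    have : g y = (γ (Ioc (t y) (t x))).toReal + g x := by
      rw [hg]
      simp only [hG]
      rw [hsum, ENNReal.toReal_add hfin (measure_ne_top _ _)]
    rw [this]
    have := ENNReal.toReal_pos hpos.ne' hfin
    linarith
  have hmono : Monotone g := by
    intro x y hxy
    rcases eq_or_lt_of_le hxy with h | h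
    · rw [h]
    · exact (hstrict x y h).le
  -- split the integral
  have hsplit : ∫ x, g x ∂γ = (∫ x in Ioi c, g x ∂γ) + ∫ x in Iic c, g x ∂γ := by
    rw [← compl_Ioi]
    exact (integral_add_compl measurableSet_Ioi hgint).symm
  -- upper bound on Iic part
  have h2 : ∫ x in Iic c, g x ∂γ ≤ g c * b := by
    have : ∫ x in Iic c, g x ∂γ ≤ ∫ _x in Iic c, g c ∂γ := by
      refine setIntegral_mono_on hgint.integrableOn ((integrableOn_const_iff enorm_ne_top).mpr ?_)
        measurableSet_Iic fun x hx => hmono hx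
      right; exact measure_lt_top _ _
    rw [setIntegral_const] at this
    calc ∫ x in Iic c, g x ∂γ ≤ (γ (Iic c)).toReal • g c := this
    _ = g c * b := by rw [smul_eq_mul, hbdef, mul_comm]
  -- strict lower bound on Ioi part
  have h1 : g c * a < ∫ x in Ioi c, g x ∂γ := by
    have hkey : 0 < ∫ x in Ioi c, (g x - g c) ∂γ := by
      rw [setIntegral_pos_iff_support_of_nonneg_ae]
      · have hsub : Ioi c ⊆ (Function.support fun x => g x - g c) ∩ Ioi c := by
          intro x hx
          refine ⟨?_, hx⟩
          simp only [Function.mem_support]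
          exact sub_ne_zero.mpr (hstrict c x hx).ne'
        exact lt_of_lt_of_le (gpos (Ioi c) isOpen_Ioi nonempty_Ioi) (measure_mono hsub)
      · refine (ae_restrict_iff' measurableSet_Ioi).mpr (ae_of_all _ fun x hx => ?_)
        have := hstrict c x hx
        simp only [Pi.zero_apply]
        linarith
      · exact (hgint.sub (integrable_const _)).integrableOn
    have : ∫ x in Ioi c, (g x - g c) ∂γ
        = (∫ x in Ioi c, g x ∂γ) - (γ (Ioi c)).toReal • g c := by
      rw [integral_sub hgint.integrableOn ((integrableOn_const_iff enorm_ne_top).mpr (Or.inr (measure_lt_top _ _))),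
        setIntegral_const, measureReal_def]
    rw [this, smul_eq_mul] at hkey
    rw [ha] at *
    linarith [hkey]
  rw [hsplit]
  set IA := ∫ x in Ioi c, g x ∂γ with hIAdef
  set IB := ∫ x in Iic c, g x ∂γ with hIBdef
  have hIA : IA - a * IA = b * IA := by
    have hba : b = 1 - a := by linarith
    rw [hba]; ring
  nlinarith [mul_lt_mul_of_pos_left h1 hbpos, mul_le_mul_of_nonneg_left h2 hapos.le, hIA]
end

section
/- For a bivariate normal vector (X, Y) with mean zero, unit variances, and correlation σ ∈ (−1,0), the indicators A = 1{μ₁ + X > 0} and B = 1{μ₂ + Y > 0} are negatively correlated, i.e., Cov(A, B) < 0. -/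
open MeasureTheory ProbabilityTheory Set

namespace ProbitAux

noncomputable def ν : Measure ℝ := gaussianReal 0 1

instance : IsProbabilityMeasure ν := by unfold ν; infer_instance

lemma nu_pos {s : Set ℝ} (hs : volume s ≠ 0) : ν s ≠ 0 := by
  intro h
  exact hs ((gaussianReal_absolutelyContinuous' 0 one_ne_zero) h)

lemma nu_Ioc_pos {s t : ℝ} (h : s < t) : ν (Set.Ioc s t) ≠ 0 := by
  apply nu_pos
  simp [Real.volume_Ioc, h, sub_pos.mpr h, ENNReal.ofReal_eq_zero, not_le]

lemma nu_Ioi_pos (a : ℝ) : ν (Set.Ioi a) ≠ 0 := by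
  apply nu_pos; simp [Real.volume_Ioi]

lemma nu_Iio_pos (a : ℝ) : ν (Set.Iio a) ≠ 0 := by
  apply nu_pos; simp [Real.volume_Iio]

/-- survival function -/
noncomputable def G (t : ℝ) : ℝ := (ν (Set.Ioi t)).toReal

lemma G_anti : Antitone G := fun s t hst =>
  ENNReal.toReal_mono (measure_ne_top _ _) (measure_mono (Set.Ioi_subset_Ioi hst))

lemma G_strictAnti : StrictAnti G := by
  intro s t hst
  have hsplit : Set.Ioi s = Set.Ioc s t ∪ Set.Ioi t := (Set.Ioc_union_Ioi_eq_Ioi hst.le).symm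
  have hdisj : Disjoint (Set.Ioc s t) (Set.Ioi t) := Set.Ioc_disjoint_Ioi le_rfl
  have : ν (Set.Ioi s) = ν (Set.Ioc s t) + ν (Set.Ioi t) := by
    rw [hsplit, measure_union hdisj measurableSet_Ioi]
  have hlt : ν (Set.Ioi t) < ν (Set.Ioi s) := by
    rw [this, add_comm]
    exact ENNReal.lt_add_right (measure_ne_top ν _) (nu_Ioc_pos hst)
  exact ENNReal.toReal_lt_toReal (measure_ne_top _ _) (measure_ne_top _ _) |>.mpr hlt

lemma G_measurable : Measurable G := G_anti.measurable

lemma G_nonneg (t : ℝ) : 0 ≤ G t := ENNReal.toReal_nonneg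

lemma G_le_one (t : ℝ) : G t ≤ 1 := by
  have := prob_le_one (μ := ν) (s := Set.Ioi t)
  simpa [G] using ENNReal.toReal_mono (by simp) this

end ProbitAux

/-- Negative correlation of the Gaussian errors yields negatively correlated indicators. -/
theorem probit_neg_corr (μ₁ μ₂ σ : ℝ) (hσ : σ ∈ Set.Ioo (-1 : ℝ) 0) :
    ((biGauss σ) {p : ℝ × ℝ | 0 < μ₁ + p.1 ∧ 0 < μ₂ + p.2}).toReal -
        ((biGauss σ) {p : ℝ × ℝ | 0 < μ₁ + p.1}).toReal *
          ((biGauss σ) {p : ℝ × ℝ | 0 < μ₂ + p.2}).toReal < 0 := by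
  obtain ⟨hσ1, hσ0⟩ := hσ
  open ProbitAux in
  set c : ℝ := Real.sqrt (1 - σ ^ 2) with hc_def
  have hc : 0 < c := Real.sqrt_pos.mpr (by nlinarith)
  set a : ℝ := -μ₁ with ha_def
  set b : ℝ := -μ₂ with hb_def
  set h : ℝ → ℝ := fun x => (b - σ * x) / c with hh_def
  have hh_mono : StrictMono h := by
    intro x y hxy
    have : σ * y < σ * x := by nlinarith
    exact div_lt_div_of_pos_right (by linarith) hc
  have hh_meas : Measurable h := by
    rw [hh_def]
    exact (measurable_const.sub (measurable_const.mul measurable_id)).div_const c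
  have hT : Measurable (fun p : ℝ × ℝ => (p.1, σ * p.1 + c * p.2)) :=
    measurable_fst.prodMk
      ((measurable_const.mul measurable_fst).add (measurable_const.mul measurable_snd))
  have hbi : ∀ S : Set (ℝ × ℝ), MeasurableSet S →
      biGauss σ S = (ν.prod ν) ((fun p : ℝ × ℝ => (p.1, σ * p.1 + c * p.2)) ⁻¹' S) :=
    fun S hS => Measure.map_apply hT hS
  have hS1 : MeasurableSet {p : ℝ × ℝ | 0 < μ₁ + p.1} :=
    measurableSet_lt measurable_const (measurable_const.add measurable_fst)
  have hS2 : MeasurableSet {p : ℝ × ℝ | 0 < μ₂ + p.2} :=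
    measurableSet_lt measurable_const (measurable_const.add measurable_snd)
  have hS12 : MeasurableSet {p : ℝ × ℝ | 0 < μ₁ + p.1 ∧ 0 < μ₂ + p.2} := hS1.inter hS2
  have hF_meas : Measurable (fun t => ν (Set.Ioi t)) :=
    Antitone.measurable (fun s t hst => measure_mono (Set.Ioi_subset_Ioi hst))
  have hGh : Measurable (fun x => ν (Set.Ioi (h x))) := hF_meas.comp hh_meas
  -- first marginal
  have hpre1 : (fun p : ℝ × ℝ => (p.1, σ * p.1 + c * p.2)) ⁻¹' {p : ℝ × ℝ | 0 < μ₁ + p.1}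
      = Set.Ioi a ×ˢ (Set.univ : Set ℝ) := by
    ext p
    simp only [Set.mem_preimage, Set.mem_setOf_eq, Set.mem_prod, Set.mem_Ioi, Set.mem_univ,
      and_true, ha_def]
    constructor <;> intro <;> linarith
  have e1 : ((biGauss σ) {p : ℝ × ℝ | 0 < μ₁ + p.1}).toReal = G a := by
    rw [hbi _ hS1, hpre1, Measure.prod_prod, measure_univ, mul_one]; rfl
  -- second marginal
  have hsec2 : ∀ x : ℝ, (Prod.mk x) ⁻¹'
      ((fun p : ℝ × ℝ => (p.1, σ * p.1 + c * p.2)) ⁻¹' {p : ℝ × ℝ | 0 < μ₂ + p.2})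
      = Set.Ioi (h x) := by
    intro x
    ext z
    simp only [Set.mem_preimage, Set.mem_setOf_eq, Set.mem_Ioi, hh_def, hb_def]
    rw [div_lt_iff₀ hc]
    constructor <;> intro <;> nlinarith
  have e2 : ((biGauss σ) {p : ℝ × ℝ | 0 < μ₂ + p.2}).toReal = ∫ x, G (h x) ∂ν := by
    rw [hbi _ hS2, Measure.prod_apply (hT hS2)]
    rw [lintegral_congr fun x => by rw [hsec2 x]]
    exact (integral_toReal hGh.aemeasurable (ae_of_all _ fun x => measure_lt_top _ _)).symm
  -- joint
  have e12 : ((biGauss σ) {p : ℝ × ℝ | 0 < μ₁ + p.1 ∧ 0 < μ₂ + p.2}).toReal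
      = ∫ x in Set.Ioi a, G (h x) ∂ν := by
    rw [hbi _ hS12, Measure.prod_apply (hT hS12)]
    have hind : (fun x => ν ((Prod.mk x) ⁻¹'
        ((fun p : ℝ × ℝ => (p.1, σ * p.1 + c * p.2)) ⁻¹'
          {p : ℝ × ℝ | 0 < μ₁ + p.1 ∧ 0 < μ₂ + p.2})))
        = (Set.Ioi a).indicator (fun x => ν (Set.Ioi (h x))) := by
      funext x
      by_cases hx : x ∈ Set.Ioi a
      · rw [Set.indicator_of_mem hx]
        congr 1
        ext z
        simp only [Set.mem_preimage, Set.mem_setOf_eq, Set.mem_Ioi, hh_def, hb_def]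
        rw [div_lt_iff₀ hc]
        simp only [Set.mem_Ioi, ha_def] at hx
        constructor
        · rintro ⟨-, h2⟩; nlinarith
        · intro hz; exact ⟨by linarith, by nlinarith⟩
      · rw [Set.indicator_of_notMem hx]
        simp only [Set.mem_Ioi, not_lt, ha_def] at hx
        have : (Prod.mk x) ⁻¹'
            ((fun p : ℝ × ℝ => (p.1, σ * p.1 + c * p.2)) ⁻¹'
              {p : ℝ × ℝ | 0 < μ₁ + p.1 ∧ 0 < μ₂ + p.2}) = (∅ : Set ℝ) := by
          ext z
          simp only [Set.mem_preimage, Set.mem_setOf_eq, Set.mem_empty_iff_false, iff_false,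
            not_and]
          intro h1
          linarith
        rw [this, measure_empty]
    rw [lintegral_congr fun x => congrFun hind x, lintegral_indicator measurableSet_Ioi]
    exact (integral_toReal hGh.aemeasurable.restrict
      (ae_of_all _ fun x => measure_lt_top _ _)).symm
  rw [e1, e2, e12]
  -- now a purely one-dimensional covariance estimate
  set g : ℝ → ℝ := fun x => G (h x) with hg_def
  have hg_anti : StrictAnti g := fun x y hxy => G_strictAnti (hh_mono hxy)
  have hg_meas : Measurable g := G_measurable.comp hh_meas
  have hg_int : Integrable g ν :=
    (integrable_const (1 : ℝ)).mono' hg_meas.aestronglyMeasurable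
      (ae_of_all _ fun x => by
        rw [Real.norm_eq_abs, abs_of_nonneg (G_nonneg _)]; exact G_le_one _)
  set m : ℝ := G (h a) with hm_def
  set p : ℝ := G a with hp_def
  set q : ℝ := (ν (Set.Iic a)).toReal with hq_def
  have hp0 : 0 < p := ENNReal.toReal_pos (nu_Ioi_pos a) (measure_ne_top _ _)
  have hq0 : 0 < q := by
    refine ENNReal.toReal_pos (fun h0 => nu_Iio_pos a ?_) (measure_ne_top _ _)
    exact le_antisymm (le_trans (measure_mono Set.Iio_subset_Iic_self) h0.le) zero_le
  have hpq : q + p = 1 := by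
    have hsum : ν (Set.Iic a) + ν (Set.Ioi a) = 1 := by
      rw [← measure_union (Set.Iic_disjoint_Ioi le_rfl) measurableSet_Ioi,
        Set.Iic_union_Ioi, measure_univ]
    have h2 := congrArg ENNReal.toReal hsum
    rwa [ENNReal.toReal_add (measure_ne_top _ _) (measure_ne_top _ _), ENNReal.toReal_one] at h2
  have hm0 : 0 ≤ m := G_nonneg _
  -- I₁ < m * p
  have hA : ∫ x in Set.Ioi a, g x ∂ν < m * p := by
    have hpos : 0 < ∫ x in Set.Ioi a, (m - g x) ∂ν := by
      refine (integral_pos_iff_support_of_nonneg_ae ?_ ?_).mpr ?_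
      · refine (ae_restrict_iff' measurableSet_Ioi).mpr (ae_of_all _ fun x hx => ?_)
        exact sub_nonneg.mpr (G_anti (hh_mono hx).le)
      · exact ((integrable_const m).restrict).sub hg_int.restrict
      · have hsub : Set.Ioi a ⊆ Function.support fun x => m - g x := fun x hx =>
          ne_of_gt (sub_pos.mpr (hg_anti hx))
        calc (0 : ENNReal) < ν.restrict (Set.Ioi a) (Set.Ioi a) := by
              rw [Measure.restrict_apply_self]; exact (nu_Ioi_pos a).bot_lt
          _ ≤ _ := measure_mono hsub
    have hint : ∫ x in Set.Ioi a, (m - g x) ∂ν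
        = m * p - ∫ x in Set.Ioi a, g x ∂ν := by
      rw [integral_sub ((integrable_const m).restrict) hg_int.restrict, setIntegral_const,
        smul_eq_mul, mul_comm]
      rfl
    rw [hint] at hpos
    linarith
  -- m * q < I₂
  have hB : m * q < ∫ x in Set.Iic a, g x ∂ν := by
    have hpos : 0 < ∫ x in Set.Iic a, (g x - m) ∂ν := by
      refine (integral_pos_iff_support_of_nonneg_ae ?_ ?_).mpr ?_
      · refine (ae_restrict_iff' measurableSet_Iic).mpr (ae_of_all _ fun x hx => ?_)
        exact sub_nonneg.mpr (G_anti (hh_mono.monotone hx))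
      · exact hg_int.restrict.sub ((integrable_const m).restrict)
      · have hsub : Set.Iio a ⊆ Function.support fun x => g x - m := fun x hx =>
          ne_of_gt (sub_pos.mpr (hg_anti hx))
        calc (0 : ENNReal) < ν.restrict (Set.Iic a) (Set.Iio a) := by
              rw [Measure.restrict_apply measurableSet_Iio,
                Set.inter_eq_self_of_subset_left Set.Iio_subset_Iic_self]
              exact (nu_Iio_pos a).bot_lt
          _ ≤ _ := measure_mono hsub
    have hint : ∫ x in Set.Iic a, (g x - m) ∂ν
        = (∫ x in Set.Iic a, g x ∂ν) - m * q := by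
      rw [integral_sub hg_int.restrict ((integrable_const m).restrict), setIntegral_const,
        smul_eq_mul, mul_comm]
      rfl
    rw [hint] at hpos
    linarith
  have hsplit : (∫ x in Set.Iic a, g x ∂ν) + ∫ x in Set.Ioi a, g x ∂ν = ∫ x, g x ∂ν := by
    rw [← Set.compl_Iic]
    exact integral_add_compl measurableSet_Iic hg_int
  rw [← hsplit]
  nlinarith [mul_lt_mul_of_pos_left hA hq0, mul_lt_mul_of_pos_left hB hp0,
    mul_nonneg hm0 hp0.le, mul_nonneg hm0 hq0.le]
end

section
/- The bivariate normal CDF Φ₂(x, y, σ) is strictly increasing in the correlation parameter σ on (−1, 1), for any fixed x, y ∈ ℝ. -/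
open MeasureTheory ProbabilityTheory Set Filter Real Metric Topology

set_option maxHeartbeats 1000000

noncomputable def stdPDF (s : ℝ) : ℝ := (Real.sqrt (2 * Real.pi))⁻¹ * Real.exp (-s ^ 2 / 2)

lemma gaussianPDFReal_zero_one (s : ℝ) : gaussianPDFReal 0 1 s = stdPDF s := by
  simp [gaussianPDFReal, stdPDF]

lemma stdPDF_pos (s : ℝ) : 0 < stdPDF s := by
  have : (0:ℝ) < Real.sqrt (2 * Real.pi) := Real.sqrt_pos.2 (by positivity)
  exact mul_pos (inv_pos.2 this) (Real.exp_pos _)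

lemma continuous_stdPDF : Continuous stdPDF := by
  unfold stdPDF; fun_prop

lemma integrable_stdPDF : Integrable stdPDF := by
  have := integrable_gaussianPDFReal 0 1
  simpa [funext gaussianPDFReal_zero_one] using this

lemma hasDerivAt_stdPDF (s : ℝ) : HasDerivAt stdPDF (-s * stdPDF s) s := by
  have h1 : HasDerivAt (fun t : ℝ => -t ^ 2 / 2) (-s) s := by
    have : HasDerivAt (fun t : ℝ => -t ^ 2 / 2) (-(2 * s ^ 1) / 2) s := by
      exact (((hasDerivAt_pow 2 s).neg).div_const 2)
    convert this using 1; ring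
  have h2 : HasDerivAt (fun t : ℝ => Real.exp (-t ^ 2 / 2))
      (Real.exp (-s ^ 2 / 2) * (-s)) s := (Real.hasDerivAt_exp _).comp s h1
  have := h2.const_mul (Real.sqrt (2 * Real.pi))⁻¹
  refine this.congr_deriv (Eq.symm ?_)
  unfold stdPDF; ring

lemma Phi_eq_integral (t : ℝ) : Phi t = ∫ s in Iic t, stdPDF s := by
  rw [Phi, gaussianReal_apply_eq_integral 0 one_ne_zero]
  rw [ENNReal.toReal_ofReal]
  · simp [funext gaussianPDFReal_zero_one]
  · exact setIntegral_nonneg measurableSet_Iic fun s _ => gaussianPDFReal_nonneg 0 1 s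

lemma hasDerivAt_Phi (t : ℝ) : HasDerivAt Phi (stdPDF t) t := by
  have key : ∀ u : ℝ, Phi u = Phi 0 + ∫ s in (0:ℝ)..u, stdPDF s := by
    intro u
    rw [Phi_eq_integral, Phi_eq_integral]
    have := intervalIntegral.integral_Iic_sub_Iic (f := stdPDF) (μ := volume) (a := 0) (b := u)
      integrable_stdPDF.integrableOn integrable_stdPDF.integrableOn
    linarith
  have h : HasDerivAt (fun u => Phi 0 + ∫ s in (0:ℝ)..u, stdPDF s) (stdPDF t) t := by
    refine HasDerivAt.const_add _ ?_
    exact intervalIntegral.integral_hasDerivAt_right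
      integrable_stdPDF.intervalIntegrable
      continuous_stdPDF.stronglyMeasurable.stronglyMeasurableAtFilter
      continuous_stdPDF.continuousAt
  exact h.congr_deriv rfl |>.congr_of_eventuallyEq (Filter.Eventually.of_forall fun u => (key u))

lemma Phi_nonneg (t : ℝ) : 0 ≤ Phi t := ENNReal.toReal_nonneg

lemma Phi_le_one (t : ℝ) : Phi t ≤ 1 := by
  rw [Phi]
  have h := prob_le_one (μ := gaussianReal 0 1) (s := Set.Iic t)
  exact ENNReal.toReal_le_of_le_ofReal one_pos.le (by simpa using h)

lemma continuous_Phi : Continuous Phi :=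
  continuous_iff_continuousAt.2 fun t => (hasDerivAt_Phi t).continuousAt

lemma Phi2_eq (x y σ : ℝ) (hσ : σ ∈ Ioo (-1:ℝ) 1) :
    Phi2 x y σ = ∫ s in Iic x, stdPDF s * Phi ((y - σ * s) / Real.sqrt (1 - σ ^ 2)) := by
  obtain ⟨h1, h2⟩ := hσ
  set c := Real.sqrt (1 - σ ^ 2) with hc
  have hσ2 : 0 < 1 - σ ^ 2 := by nlinarith
  have hcpos : 0 < c := Real.sqrt_pos.2 hσ2
  set μ := gaussianReal 0 1 with hμ
  have hT : Measurable (fun p : ℝ × ℝ => (p.1, σ * p.1 + c * p.2)) := by fun_prop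
  have hS : MeasurableSet (Set.Iic x ×ˢ Set.Iic y) :=
    measurableSet_Iic.prod measurableSet_Iic
  have hpre : (fun p : ℝ × ℝ => (p.1, σ * p.1 + c * p.2)) ⁻¹' (Set.Iic x ×ˢ Set.Iic y)
      = {p : ℝ × ℝ | p.1 ≤ x ∧ σ * p.1 + c * p.2 ≤ y} := by
    ext p; simp [Set.mem_prod]
  have key : biGauss σ (Set.Iic x ×ˢ Set.Iic y)
      = ∫⁻ s in Iic x, ENNReal.ofReal (Phi ((y - σ * s) / c)) ∂μ := by
    rw [biGauss, Measure.map_apply hT hS, hpre, Measure.prod_apply]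
    · rw [← lintegral_indicator (μ := μ) measurableSet_Iic]
      congr 1
      ext s
      by_cases hs : s ≤ x
      · have : (Prod.mk s ⁻¹' {p : ℝ × ℝ | p.1 ≤ x ∧ σ * p.1 + c * p.2 ≤ y})
            = Iic ((y - σ * s) / c) := by
          ext t
          simp only [Set.mem_preimage, Set.mem_setOf_eq, Set.mem_Iic]
          constructor
          · rintro ⟨-, h⟩
            rw [le_div_iff₀ hcpos]; linarith [mul_comm c t]
          · intro h
            refine ⟨hs, ?_⟩
            rw [le_div_iff₀ hcpos] at h
            linarith [mul_comm t c]
        rw [this, Set.indicator_of_mem (show s ∈ Iic x from hs)]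
        rw [show Phi ((y - σ * s) / c) = (μ (Iic ((y - σ * s) / c))).toReal from rfl]
        rw [ENNReal.ofReal_toReal (measure_ne_top _ _)]
      · have : (Prod.mk s ⁻¹' {p : ℝ × ℝ | p.1 ≤ x ∧ σ * p.1 + c * p.2 ≤ y}) = ∅ := by
          ext t; simp only [Set.mem_preimage, Set.mem_setOf_eq]; tauto
        rw [this, Set.indicator_of_notMem (show s ∉ Iic x from hs)]
        simp
    · rw [← hpre]; exact hT hS
  have meas_int : Phi2 x y σ = ∫ s in Iic x, Phi ((y - σ * s) / c) ∂μ := by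
    rw [Phi2, key, integral_eq_lintegral_of_nonneg_ae]
    · exact ae_of_all _ fun s => Phi_nonneg _
    · exact ((continuous_Phi.comp (by fun_prop)).aestronglyMeasurable).restrict
  rw [meas_int]
  have hdens : gaussianPDF 0 1 = fun s => ((gaussianPDFReal 0 1 s).toNNReal : ENNReal) := rfl
  rw [hμ, gaussianReal_of_var_ne_zero 0 one_ne_zero, hdens]
  rw [setIntegral_withDensity_eq_setIntegral_smul
    (by exact (measurable_gaussianPDFReal 0 1).real_toNNReal) _ measurableSet_Iic]
  refine setIntegral_congr_fun measurableSet_Iic fun s _ => ?_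
  rw [NNReal.smul_def, smul_eq_mul, Real.coe_toNNReal _ (gaussianPDFReal_nonneg 0 1 s),
    gaussianPDFReal_zero_one]

lemma hasDerivAt_sqrt_one_sub_sq {σ : ℝ} (h : 0 < 1 - σ ^ 2) :
    HasDerivAt (fun σ : ℝ => Real.sqrt (1 - σ ^ 2)) (-σ / Real.sqrt (1 - σ ^ 2)) σ := by
  have hin : HasDerivAt (fun σ : ℝ => 1 - σ ^ 2) (-(2 * σ)) σ := by
    simpa using ((hasDerivAt_pow 2 σ).const_sub 1)
  have := (Real.hasDerivAt_sqrt (ne_of_gt h)).comp σ hin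
  refine this.congr_deriv (Eq.symm ?_)
  field_simp

lemma hasDerivAt_u (y s : ℝ) {σ : ℝ} (h : 0 < 1 - σ ^ 2) :
    HasDerivAt (fun σ : ℝ => (y - σ * s) / Real.sqrt (1 - σ ^ 2))
      ((σ * y - s) / (Real.sqrt (1 - σ ^ 2)) ^ 3) σ := by
  have hc : 0 < Real.sqrt (1 - σ ^ 2) := Real.sqrt_pos.2 h
  have hnum : HasDerivAt (fun σ : ℝ => y - σ * s) (-s) σ := by
    simpa using ((hasDerivAt_mul_const s).const_sub y)
  have := hnum.div (hasDerivAt_sqrt_one_sub_sq h) (ne_of_gt hc)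
  refine this.congr_deriv (Eq.symm ?_)
  have hsq : Real.sqrt (1 - σ ^ 2) ^ 2 = 1 - σ ^ 2 := Real.sq_sqrt h.le
  have hnum2 : -s * √(1 - σ ^ 2) - (y - σ * s) * (-σ / √(1 - σ ^ 2))
      = (σ * y - s) / √(1 - σ ^ 2) := by
    field_simp
    linear_combination (-s : ℝ) * hsq
  rw [hnum2, div_div]
  congr 1
  ring

lemma hasDerivAt_inner (y s : ℝ) {σ : ℝ} (h : 0 < 1 - σ ^ 2) :
    HasDerivAt (fun σ : ℝ => stdPDF s * Phi ((y - σ * s) / Real.sqrt (1 - σ ^ 2)))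
      (stdPDF s * stdPDF ((y - σ * s) / Real.sqrt (1 - σ ^ 2)) * (σ * y - s)
        / (Real.sqrt (1 - σ ^ 2)) ^ 3) σ := by
  have := ((hasDerivAt_Phi ((y - σ * s) / Real.sqrt (1 - σ ^ 2))).comp σ
    (hasDerivAt_u y s h)).const_mul (stdPDF s)
  refine this.congr_deriv (Eq.symm ?_)
  ring

lemma hasDerivAt_Fs (y : ℝ) {σ : ℝ} (h : 0 < 1 - σ ^ 2) (s : ℝ) :
    HasDerivAt (fun s : ℝ => stdPDF s * stdPDF ((y - σ * s) / Real.sqrt (1 - σ ^ 2))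
        / Real.sqrt (1 - σ ^ 2))
      (stdPDF s * stdPDF ((y - σ * s) / Real.sqrt (1 - σ ^ 2)) * (σ * y - s)
        / (Real.sqrt (1 - σ ^ 2)) ^ 3) s := by
  set c := Real.sqrt (1 - σ ^ 2) with hc
  have hcpos : 0 < c := Real.sqrt_pos.2 h
  have hsq : c ^ 2 = 1 - σ ^ 2 := Real.sq_sqrt h.le
  have hu : HasDerivAt (fun s : ℝ => (y - σ * s) / c) (-σ / c) s := by
    have : HasDerivAt (fun s : ℝ => (y - σ * s)) (-σ) s := by
      simpa using ((hasDerivAt_id s).const_mul σ).const_sub y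
    simpa [div_eq_mul_inv, neg_mul] using this.div_const c
  have h2 : HasDerivAt (fun s : ℝ => stdPDF ((y - σ * s) / c))
      (-((y - σ * s) / c) * stdPDF ((y - σ * s) / c) * (-σ / c)) s :=
    (hasDerivAt_stdPDF ((y - σ * s) / c)).comp (h := fun s : ℝ => (y - σ * s) / c) s hu
  have h3 := ((hasDerivAt_stdPDF s).mul h2).div_const c
  refine h3.congr_deriv (Eq.symm ?_)
  set u := (y - σ * s) / c
  have hu' : u * c = y - σ * s := div_mul_cancel₀ _ (ne_of_gt hcpos)
  have hkey : -s * stdPDF s * stdPDF u + stdPDF s * (-u * stdPDF u * (-σ / c))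
      = stdPDF s * stdPDF u * (σ * y - s) / c ^ 2 := by
    field_simp
    linear_combination (stdPDF s * stdPDF u * σ) * hu' + (- s * stdPDF s * stdPDF u) * hsq
  rw [hkey, div_div]
  norm_num [pow_succ]

lemma stdPDF_le (s : ℝ) : stdPDF s ≤ (Real.sqrt (2 * Real.pi))⁻¹ := by
  have h : Real.exp (-s ^ 2 / 2) ≤ 1 := Real.exp_le_one_iff.2 (by nlinarith [sq_nonneg s])
  have : (0:ℝ) ≤ (Real.sqrt (2 * Real.pi))⁻¹ := by positivity
  calc stdPDF s ≤ (Real.sqrt (2 * Real.pi))⁻¹ * 1 := mul_le_mul_of_nonneg_left h this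
  _ = _ := mul_one _

lemma abs_mul_exp_le (s : ℝ) : |s| * Real.exp (-s ^ 2 / 2) ≤ 2 * Real.exp (-s ^ 2 / 4) := by
  have key : |s| * Real.exp (-s ^ 2 / 4) ≤ 2 := by
    rcases le_or_gt (|s|) 2 with h | h
    · calc |s| * Real.exp (-s ^ 2 / 4) ≤ |s| * 1 :=
        mul_le_mul_of_nonneg_left (Real.exp_le_one_iff.2 (by nlinarith [sq_nonneg s])) (abs_nonneg s)
      _ ≤ 2 := by simpa using h
    · have hs2 : (0:ℝ) < s ^ 2 := by nlinarith [abs_nonneg s, sq_abs s]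
      have h1 : s ^ 2 / 4 ≤ Real.exp (s ^ 2 / 4) := by
        nlinarith [Real.add_one_le_exp (s ^ 2 / 4)]
      have h2 : Real.exp (-s ^ 2 / 4) ≤ 4 / s ^ 2 := by
        rw [show (-s ^ 2 / 4 : ℝ) = -(s ^ 2 / 4) by ring, Real.exp_neg]
        rw [inv_le_comm₀ (Real.exp_pos _) (by positivity)]
        calc (4 / s ^ 2 : ℝ)⁻¹ = s ^ 2 / 4 := by field_simp
        _ ≤ _ := h1
      calc |s| * Real.exp (-s ^ 2 / 4) ≤ |s| * (4 / s ^ 2) :=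
            mul_le_mul_of_nonneg_left h2 (abs_nonneg s)
      _ = 4 / |s| := by field_simp; rw [← sq_abs s]; ring; field_simp
      _ ≤ 2 := by rw [div_le_iff₀ (by linarith)]; nlinarith
  have hsplit : Real.exp (-s ^ 2 / 2) = Real.exp (-s ^ 2 / 4) * Real.exp (-s ^ 2 / 4) := by
    rw [← Real.exp_add]; ring_nf
  calc |s| * Real.exp (-s ^ 2 / 2) = (|s| * Real.exp (-s ^ 2 / 4)) * Real.exp (-s ^ 2 / 4) := by
        rw [hsplit]; ring
  _ ≤ 2 * Real.exp (-s ^ 2 / 4) := mul_le_mul_of_nonneg_right key (Real.exp_pos _).le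

lemma stdPDF_mul_le (y s : ℝ) :
    stdPDF s * (|y| + |s|) ≤ (Real.sqrt (2 * Real.pi))⁻¹ * (|y| + 2) * Real.exp (-s ^ 2 / 4) := by
  have h1 : Real.exp (-s ^ 2 / 2) ≤ Real.exp (-s ^ 2 / 4) :=
    Real.exp_le_exp.2 (by nlinarith [sq_nonneg s])
  have h2 := abs_mul_exp_le s
  have hpos : (0:ℝ) ≤ (Real.sqrt (2 * Real.pi))⁻¹ := by positivity
  calc stdPDF s * (|y| + |s|)
      = (Real.sqrt (2 * Real.pi))⁻¹ * (|y| * Real.exp (-s ^ 2 / 2) + |s| * Real.exp (-s ^ 2 / 2)) := by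
        unfold stdPDF; ring
  _ ≤ (Real.sqrt (2 * Real.pi))⁻¹ * (|y| * Real.exp (-s ^ 2 / 4) + 2 * Real.exp (-s ^ 2 / 4)) := by
      refine mul_le_mul_of_nonneg_left (add_le_add ?_ h2) hpos
      exact mul_le_mul_of_nonneg_left h1 (abs_nonneg y)
  _ = _ := by ring

lemma tendsto_stdPDF_atBot : Tendsto stdPDF atBot (𝓝 0) := by
  have h2 : Tendsto (fun s : ℝ => s ^ 2) atBot atTop := by
    have ha : Tendsto (fun s : ℝ => |s|) atBot atTop := tendsto_abs_atBot_atTop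
    have hp : Tendsto (fun t : ℝ => t ^ 2) atTop atTop := tendsto_pow_atTop two_ne_zero
    have := hp.comp ha
    refine this.congr fun s => ?_
    simp only [Function.comp_apply, sq_abs]
  have h3 : Tendsto (fun s : ℝ => -s ^ 2 / 2) atBot atBot := by
    have := tendsto_neg_atTop_atBot.comp (h2.atTop_div_const (by norm_num : (0:ℝ) < 2))
    refine this.congr fun s => ?_
    simp; ring
  have h4 : Tendsto (fun s : ℝ => Real.exp (-s ^ 2 / 2)) atBot (𝓝 0) :=
    Real.tendsto_exp_atBot.comp h3
  have h5 : Tendsto (fun s : ℝ => (Real.sqrt (2 * Real.pi))⁻¹ * Real.exp (-s ^ 2 / 2)) atBot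
      (𝓝 ((Real.sqrt (2 * Real.pi))⁻¹ * 0)) := h4.const_mul _
  rw [mul_zero] at h5
  exact h5

lemma hasDerivAt_G (x y σ₀ : ℝ) (hσ₀ : σ₀ ∈ Ioo (-1:ℝ) 1) :
    HasDerivAt (fun σ => ∫ s in Iic x, stdPDF s * Phi ((y - σ * s) / Real.sqrt (1 - σ ^ 2)))
      (stdPDF x * stdPDF ((y - σ₀ * x) / Real.sqrt (1 - σ₀ ^ 2)) / Real.sqrt (1 - σ₀ ^ 2)) σ₀ := by
  obtain ⟨h1, h2⟩ := hσ₀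
  have habs : |σ₀| < 1 := abs_lt.2 ⟨h1, h2⟩
  set ε := (1 - |σ₀|) / 2 with hε_def
  have hε : 0 < ε := by simp only [hε_def]; linarith
  set b := (1 + |σ₀|) / 2 with hb_def
  have hb1 : b < 1 := by simp only [hb_def]; linarith
  have hb0 : 0 ≤ b := by positivity
  set d := 1 - b ^ 2 with hd_def
  have hd : 0 < d := by simp only [hd_def]; nlinarith
  have hball : ∀ σ ∈ ball σ₀ ε, |σ| ≤ b ∧ d ≤ 1 - σ ^ 2 ∧ 0 < 1 - σ ^ 2 := by
    intro σ hσ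
    rw [mem_ball, Real.dist_eq] at hσ
    have habs' : |σ| ≤ b := by
      have := abs_sub_abs_le_abs_sub σ σ₀
      simp only [hb_def]; simp only [hε_def] at hσ; linarith
    have hsq : σ ^ 2 ≤ b ^ 2 := by
      have := sq_abs σ
      nlinarith [abs_nonneg σ]
    exact ⟨habs', by simp only [hd_def]; linarith, by nlinarith⟩
  set K := (Real.sqrt (2 * Real.pi))⁻¹ with hK_def
  have hK : 0 < K := by rw [hK_def]; positivity
  set M := K * (K * (|y| + 2)) / (Real.sqrt d) ^ 3 with hM_def
  set μ' := (volume : Measure ℝ).restrict (Iic x) with hμ'_def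
  set F := fun (σ : ℝ) (s : ℝ) => stdPDF s * Phi ((y - σ * s) / Real.sqrt (1 - σ ^ 2)) with hF_def
  set F' := fun (σ : ℝ) (s : ℝ) => stdPDF s * stdPDF ((y - σ * s) / Real.sqrt (1 - σ ^ 2))
      * (σ * y - s) / (Real.sqrt (1 - σ ^ 2)) ^ 3 with hF'_def
  have hFmeas : ∀ σ : ℝ, AEStronglyMeasurable (F σ) μ' := by
    intro σ
    exact ((continuous_stdPDF.mul (continuous_Phi.comp (by fun_prop))).aestronglyMeasurable).restrict
  have hFint : Integrable (F σ₀) μ' := by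
    refine Integrable.mono integrable_stdPDF.restrict (hFmeas σ₀) (ae_of_all _ fun s => ?_)
    rw [Real.norm_eq_abs, Real.norm_eq_abs, abs_of_pos (stdPDF_pos s),
      abs_of_nonneg (mul_nonneg (stdPDF_pos s).le (Phi_nonneg _))]
    calc stdPDF s * Phi _ ≤ stdPDF s * 1 :=
      mul_le_mul_of_nonneg_left (Phi_le_one _) (stdPDF_pos s).le
    _ = stdPDF s := mul_one _
  have hF'meas : AEStronglyMeasurable (F' σ₀) μ' := by
    exact (((continuous_stdPDF.mul (continuous_stdPDF.comp (by fun_prop))).mul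
      (by fun_prop)).div_const _).aestronglyMeasurable.restrict
  have hbound : ∀ᵐ s ∂μ', ∀ σ ∈ ball σ₀ ε, ‖F' σ s‖ ≤ M * Real.exp (-s ^ 2 / 4) := by
    refine ae_of_all _ fun s σ hσ => ?_
    obtain ⟨hσb, hσd, hσpos⟩ := hball σ hσ
    have hc : 0 < Real.sqrt (1 - σ ^ 2) := Real.sqrt_pos.2 hσpos
    have hcd : Real.sqrt d ≤ Real.sqrt (1 - σ ^ 2) := Real.sqrt_le_sqrt hσd
    have hsd : 0 < Real.sqrt d := Real.sqrt_pos.2 hd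
    have habs1 : |σ * y - s| ≤ |y| + |s| := by
      have h3 : |σ * y - s| ≤ |σ * y| + |s| := abs_sub (σ * y) s
      have h4 : |σ * y| ≤ |y| := by
        rw [abs_mul]
        calc |σ| * |y| ≤ 1 * |y| :=
          mul_le_mul_of_nonneg_right (le_trans hσb hb1.le) (abs_nonneg y)
        _ = |y| := one_mul _
      linarith
    have hnorm : ‖F' σ s‖ = stdPDF s * stdPDF ((y - σ * s) / Real.sqrt (1 - σ ^ 2))
        * |σ * y - s| / (Real.sqrt (1 - σ ^ 2)) ^ 3 := by
      rw [hF'_def]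
      simp only [Real.norm_eq_abs, abs_div, abs_mul]
      rw [abs_of_pos (stdPDF_pos _), abs_of_pos (stdPDF_pos _), abs_of_pos (pow_pos hc 3)]
    rw [hnorm]
    have hA : (0:ℝ) ≤ stdPDF s := (stdPDF_pos s).le
    have step1 : stdPDF s * stdPDF ((y - σ * s) / Real.sqrt (1 - σ ^ 2)) * |σ * y - s|
        ≤ stdPDF s * (K * (|y| + |s|)) := by
      rw [mul_assoc]
      refine mul_le_mul_of_nonneg_left ?_ hA
      exact mul_le_mul (stdPDF_le _) habs1 (abs_nonneg _) hK.le
    have hden : (Real.sqrt d) ^ 3 ≤ (Real.sqrt (1 - σ ^ 2)) ^ 3 :=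
      pow_le_pow_left₀ hsd.le hcd 3
    calc stdPDF s * stdPDF ((y - σ * s) / Real.sqrt (1 - σ ^ 2)) * |σ * y - s|
          / (Real.sqrt (1 - σ ^ 2)) ^ 3
        ≤ stdPDF s * (K * (|y| + |s|)) / (Real.sqrt d) ^ 3 :=
          div_le_div₀ (by positivity) step1 (by positivity) hden
    _ = K * (stdPDF s * (|y| + |s|)) / (Real.sqrt d) ^ 3 := by ring
    _ ≤ K * (K * (|y| + 2) * Real.exp (-s ^ 2 / 4)) / (Real.sqrt d) ^ 3 :=
          div_le_div₀ (by positivity)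
            (mul_le_mul_of_nonneg_left (stdPDF_mul_le y s) hK.le) (by positivity) le_rfl
    _ = M * Real.exp (-s ^ 2 / 4) := by rw [hM_def]; ring
  have hbound_int : Integrable (fun s => M * Real.exp (-s ^ 2 / 4)) μ' := by
    have h5 : Integrable (fun s : ℝ => Real.exp (-(4:ℝ)⁻¹ * s ^ 2)) :=
      integrable_exp_neg_mul_sq (by norm_num)
    have h6 : Integrable (fun s : ℝ => M * Real.exp (-s ^ 2 / 4)) := by
      have heq : (fun s : ℝ => M * Real.exp (-(4:ℝ)⁻¹ * s ^ 2))
          = fun s : ℝ => M * Real.exp (-s ^ 2 / 4) := by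
        funext s
        have : -(4:ℝ)⁻¹ * s ^ 2 = -s ^ 2 / 4 := by ring
        rw [this]
      exact heq ▸ h5.const_mul M
    exact h6.restrict
  have hdiff : ∀ᵐ s ∂μ', ∀ σ ∈ ball σ₀ ε, HasDerivAt (fun σ => F σ s) (F' σ s) σ := by
    refine ae_of_all _ fun s σ hσ => ?_
    exact hasDerivAt_inner y s (hball σ hσ).2.2
  have hσ₀pos : 0 < 1 - σ₀ ^ 2 := by nlinarith
  obtain ⟨hint, hderiv⟩ := hasDerivAt_integral_of_dominated_loc_of_deriv_le (ball_mem_nhds σ₀ hε)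
    (Filter.Eventually.of_forall hFmeas) hFint hF'meas hbound hbound_int hdiff
  have hc₀ : 0 < Real.sqrt (1 - σ₀ ^ 2) := Real.sqrt_pos.2 hσ₀pos
  have hval : ∫ s in Iic x, F' σ₀ s
      = stdPDF x * stdPDF ((y - σ₀ * x) / Real.sqrt (1 - σ₀ ^ 2)) / Real.sqrt (1 - σ₀ ^ 2) := by
    have htend : Tendsto (fun s => stdPDF s * stdPDF ((y - σ₀ * s) / Real.sqrt (1 - σ₀ ^ 2))
        / Real.sqrt (1 - σ₀ ^ 2)) atBot (𝓝 0) := by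
      apply squeeze_zero
        (fun s => div_nonneg (mul_nonneg (stdPDF_pos _).le (stdPDF_pos _).le) (Real.sqrt_nonneg _))
        (g := fun s => stdPDF s * (K / Real.sqrt (1 - σ₀ ^ 2)))
      · intro s
        rw [div_eq_mul_inv, mul_assoc, div_eq_mul_inv]
        refine mul_le_mul_of_nonneg_left ?_ (stdPDF_pos s).le
        exact mul_le_mul_of_nonneg_right (stdPDF_le _) (by positivity)
      · simpa using tendsto_stdPDF_atBot.mul_const (K / Real.sqrt (1 - σ₀ ^ 2))
    have := integral_Iic_of_hasDerivAt_of_tendsto' (a := x)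
      (fun s _ => hasDerivAt_Fs y hσ₀pos s) hint htend
    rw [this, sub_zero]
  rw [← hval]
  exact hderiv

/-- Slepian / Plackett: `Φ₂(x, y, ·)` is strictly increasing in the correlation on `(-1, 1)`. -/
theorem Phi2_strictMonoOn_corr (x y : ℝ) :
    StrictMonoOn (fun σ => Phi2 x y σ) (Set.Ioo (-1 : ℝ) 1) := by
  have heqn : ∀ σ ∈ Set.Ioo (-1:ℝ) 1, (fun σ => Phi2 x y σ) =ᶠ[nhds σ]
      (fun σ => ∫ s in Iic x, stdPDF s * Phi ((y - σ * s) / Real.sqrt (1 - σ ^ 2))) := by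
    intro σ hσ
    filter_upwards [isOpen_Ioo.mem_nhds hσ] with σ' h using Phi2_eq x y σ' h
  refine strictMonoOn_of_deriv_pos (convex_Ioo _ _) ?_ ?_
  · intro σ hσ
    exact ((hasDerivAt_G x y σ hσ).continuousAt.congr ((heqn σ hσ).symm)).continuousWithinAt
  · intro σ hσ
    rw [interior_Ioo] at hσ
    rw [(heqn σ hσ).deriv_eq, (hasDerivAt_G x y σ hσ).deriv]
    have hσpos : 0 < 1 - σ ^ 2 := by
      obtain ⟨ha, hb⟩ := hσ
      nlinarith
    exact div_pos (mul_pos (stdPDF_pos _) (stdPDF_pos _)) (Real.sqrt_pos.2 hσpos)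
end
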